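/- arXiv:2409.15271 — 5 statements merged into one kernel-verified Lean document; each statement's English description precedes it below -/
import Mathlib

section
/- The normalized Gauss-type sum G_j is multiplicative in its argument: for every j ∈ ℤ and all coprime positive odd integers m and n, one has G_j(mn) = G_j(m)·G_j(n). -/
/-!
Every residue modulo `m * n` is uniquely of the form `n * u + m * v` with `u` mod `m` and
`v` mod `n`. In these coordinates the additive character splits,
`e(j (n u + m v) / (m n)) = e(j u / m) e(j v / n)`, while the Jacobi symbol becomes
`(n/m) (m/n) (u/m) (v/n)`; so the Gauss sum of `m * n` is `(n/m) (m/n)` times the product of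
those of `m` and `n`. By quadratic reciprocity `(n/m) (m/n) = -1` exactly when
`m ≡ n ≡ 3 (mod 4)`, and the normalizing factor, which is `1` or `-i` according as
`n ≡ 1` or `3 (mod 4)`, absorbs this sign because `(-i)² = -1`.
-/

/-- `e(t) = e^{2πit}`. -/
noncomputable def e (t : ℝ) : ℂ := Complex.exp (2 * (Real.pi : ℂ) * Complex.I * (t : ℂ))

/-- The normalized Gauss-type sum
`G_j(n) = ((1−i)/2 + (−1/n)(1+i)/2) ∑_{a mod n} (a/n) e(aj/n)`. -/
noncomputable def G (j : ℤ) (n : ℕ) : ℂ :=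
  ((1 - Complex.I) / 2 + (jacobiSym (-1) n : ℂ) * (1 + Complex.I) / 2) *
    ∑ a ∈ Finset.range n, (jacobiSym (a : ℤ) n : ℂ) * e ((((a : ℤ) * j : ℤ) : ℝ) / (n : ℝ))

open Finset ZMod
open scoped NumberTheorySymbols

lemma ZMod.sum_range_natCast {M : Type*} [AddCommMonoid M] (n : ℕ) [NeZero n]
    (f : ZMod n → M) : ∑ a ∈ range n, f a = ∑ x, f x := by
  obtain ⟨k, rfl⟩ := Nat.exists_eq_succ_of_ne_zero (NeZero.ne n)
  rw [← Fin.sum_univ_eq_sum_range]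
  exact Fintype.sum_congr _ _ fun i => congrArg f (natCast_zmod_val (n := k + 1) i)

lemma e_intCast_div (n : ℕ) [NeZero n] (k : ℤ) : e (k / n) = stdAddChar (k : ZMod n) := by
  rw [stdAddChar_coe, e]
  push_cast
  ring_nf

lemma stdAddChar_natCast_mul_intCast {N d a : ℕ} [NeZero N] [NeZero d] (h : d * a = N)
    (k : ℤ) : stdAddChar ((a : ZMod N) * (k : ZMod N)) = stdAddChar (k : ZMod d) := by
  have hd : (d : ℂ) ≠ 0 := Nat.cast_ne_zero.mpr (NeZero.ne d)
  have ha : (a : ℂ) ≠ 0 :=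
    Nat.cast_ne_zero.mpr (right_ne_zero_of_mul (h ▸ NeZero.ne N : d * a ≠ 0))
  rw [← Int.cast_natCast, ← Int.cast_mul, stdAddChar_coe, stdAddChar_coe, ← h]
  congr 1
  push_cast
  field_simp

section JacobiHom

variable (n : ℕ) [NeZero n]

lemma jacobiSym_val_intCast (k : ℤ) : J((k : ZMod n).val | n) = J(k | n) := by
  rw [val_intCast, ← jacobiSym.mod_left]

def jacobiHom : ZMod n →* ℤ where
  toFun a := J(a.val | n)
  map_one' := by simpa using jacobiSym_val_intCast n 1
  map_mul' a b := by
    simpa [← jacobiSym.mul_left] using jacobiSym_val_intCast n (a.val * b.val)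

lemma jacobiHom_apply (a : ZMod n) : jacobiHom n a = J(a.val | n) := rfl

lemma jacobiHom_natCast (k : ℕ) : jacobiHom n k = J(k | n) := by
  exact_mod_cast jacobiSym_val_intCast n k

end JacobiHom

lemma jacobiHom_mul_right (m n : ℕ) [NeZero m] [NeZero n] (x : ZMod (m * n)) :
    jacobiHom (m * n) x =
      jacobiHom m (castHom (dvd_mul_right m n) _ x) *
        jacobiHom n (castHom (dvd_mul_left n m) _ x) := by
  rw [jacobiHom_apply, jacobiSym.mul_right]
  simp only [castHom_apply, cast_eq_val, jacobiHom_natCast]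

noncomputable def jacobiGaussSum (j : ℤ) (n : ℕ) [NeZero n] : ℂ :=
  ∑ a : ZMod n, jacobiHom n a * stdAddChar (a * (j : ZMod n))

section CRT

variable {m n : ℕ}

def crtMap (m n : ℕ) (p : ZMod m × ZMod n) : ZMod (m * n) := n * p.1.val + m * p.2.val

lemma castHom_crtMap_fst [NeZero m] (p : ZMod m × ZMod n) :
    castHom (dvd_mul_right m n) (ZMod m) (crtMap m n p) = n * p.1 := by
  simp only [crtMap, map_add, map_mul, map_natCast, natCast_self, zero_mul, add_zero,
    natCast_zmod_val]

lemma castHom_crtMap_snd [NeZero n] (p : ZMod m × ZMod n) :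
    castHom (dvd_mul_left n m) (ZMod n) (crtMap m n p) = m * p.2 := by
  simp only [crtMap, map_add, map_mul, map_natCast, natCast_self, zero_mul, zero_add,
    natCast_zmod_val]

lemma crtMap_bijective [NeZero m] [NeZero n] (hmn : m.Coprime n) :
    (crtMap m n).Bijective := by
  rw [Fintype.bijective_iff_injective_and_card]
  refine ⟨fun p q hpq => Prod.ext ?_ ?_, by simp [ZMod.card]⟩
  · have h := congrArg (castHom (dvd_mul_right m n) (ZMod m)) hpq
    rw [castHom_crtMap_fst, castHom_crtMap_fst] at h
    exact ((isUnit_iff_coprime n m).mpr hmn.symm).mul_left_cancel h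
  · have h := congrArg (castHom (dvd_mul_left n m) (ZMod n)) hpq
    rw [castHom_crtMap_snd, castHom_crtMap_snd] at h
    exact ((isUnit_iff_coprime m n).mpr hmn).mul_left_cancel h

lemma jacobiHom_crtMap [NeZero m] [NeZero n] (p : ZMod m × ZMod n) :
    jacobiHom (m * n) (crtMap m n p) =
      J(n | m) * J(m | n) * (jacobiHom m p.1 * jacobiHom n p.2) := by
  rw [jacobiHom_mul_right, castHom_crtMap_fst, castHom_crtMap_snd, map_mul, map_mul,
    jacobiHom_natCast, jacobiHom_natCast]
  ring

lemma stdAddChar_crtMap_mul_intCast [NeZero m] [NeZero n] (p : ZMod m × ZMod n) (j : ℤ) :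
    stdAddChar (crtMap m n p * (j : ZMod (m * n))) =
      stdAddChar (p.1 * (j : ZMod m)) * stdAddChar (p.2 * (j : ZMod n)) := by
  have h : crtMap m n p * (j : ZMod (m * n)) =
      n * ((p.1.val * j : ℤ) : ZMod (m * n)) + m * ((p.2.val * j : ℤ) : ZMod (m * n)) := by
    push_cast [crtMap]
    ring
  rw [h, AddChar.map_add_eq_mul, stdAddChar_natCast_mul_intCast rfl,
    stdAddChar_natCast_mul_intCast (mul_comm n m)]
  push_cast [natCast_zmod_val]
  rfl

lemma jacobiGaussSum_mul (j : ℤ) [NeZero m] [NeZero n] (hmn : m.Coprime n) :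
    jacobiGaussSum j (m * n) =
      (J(n | m) * J(m | n) : ℤ) * (jacobiGaussSum j m * jacobiGaussSum j n) := calc
  jacobiGaussSum j (m * n) = ∑ p : ZMod m × ZMod n,
      jacobiHom (m * n) (crtMap m n p) * stdAddChar (crtMap m n p * (j : ZMod (m * n))) :=
    (Fintype.sum_bijective _ (crtMap_bijective hmn) _ _ fun _ => rfl).symm
  _ = ∑ p : ZMod m × ZMod n, ((J(n | m) * J(m | n) : ℤ) : ℂ) *
      ((jacobiHom m p.1 * stdAddChar (p.1 * (j : ZMod m))) *
        (jacobiHom n p.2 * stdAddChar (p.2 * (j : ZMod n)))) := by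
    refine sum_congr rfl fun p _ => ?_
    rw [jacobiHom_crtMap, stdAddChar_crtMap_mul_intCast]
    push_cast
    ring
  _ = _ := by rw [← mul_sum, Fintype.sum_prod_type, jacobiGaussSum, jacobiGaussSum, sum_mul_sum]

end CRT

noncomputable def normalizingFactor (n : ℕ) : ℂ :=
  (1 - Complex.I) / 2 + (J(-1 | n) : ℂ) * (1 + Complex.I) / 2

lemma G_eq_normalizingFactor_mul (j : ℤ) (n : ℕ) [NeZero n] :
    G j n = normalizingFactor n * jacobiGaussSum j n := by
  rw [G, jacobiGaussSum, ← ZMod.sum_range_natCast]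
  refine congrArg (normalizingFactor n * ·) (sum_congr rfl fun a _ => ?_)
  rw [← jacobiHom_natCast, e_intCast_div]
  push_cast
  rfl

lemma jacobiSym_mul_jacobiSym_eq_qrSign {m n : ℕ} (hmo : Odd m) (hno : Odd n) (hmn : m.Coprime n) :
    J(n | m) * J(m | n) = qrSign m n := by
  rw [jacobiSym.quadratic_reciprocity' hno hmo, mul_assoc, ← sq,
    jacobiSym.sq_one (by rwa [Int.gcd_natCast_natCast]), mul_one]

lemma normalizingFactor_mul {m n : ℕ} (hmo : Odd m) (hno : Odd n) (hmn : m.Coprime n) :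
    normalizingFactor (m * n) * (J(n | m) * J(m | n) : ℤ) =
      normalizingFactor m * normalizingFactor n := by
  have : NeZero m := ⟨hmo.pos.ne'⟩
  have : NeZero n := ⟨hno.pos.ne'⟩
  rw [normalizingFactor, normalizingFactor, normalizingFactor, jacobiSym.mul_right,
    jacobiSym_mul_jacobiSym_eq_qrSign hmo hno hmn, qrSign, ← jacobiSym.at_neg_one hmo]
  rcases jacobiSym.eq_one_or_neg_one (a := -1) (b := m) (by simp) with hm | hm <;>
  rcases jacobiSym.eq_one_or_neg_one (a := -1) (b := n) (by simp) with hn | hn <;>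
    norm_num [hm, hn, Complex.ext_iff]

theorem G_multiplicative_general (j : ℤ) (m n : ℕ)
    (hmo : Odd m) (hno : Odd n) (hmn : Nat.Coprime m n) :
    G j (m * n) = G j m * G j n := by
  have : NeZero m := ⟨hmo.pos.ne'⟩
  have : NeZero n := ⟨hno.pos.ne'⟩
  rw [G_eq_normalizingFactor_mul, G_eq_normalizingFactor_mul, G_eq_normalizingFactor_mul,
    jacobiGaussSum_mul j hmn, ← mul_assoc, normalizingFactor_mul hmo hno hmn]
  ring

/-- `G_j` is multiplicative: `G_j(mn) = G_j(m) G_j(n)` for coprime odd positive `m, n`. -/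
theorem G_multiplicative (j : ℤ) (m n : ℕ) (hm : 0 < m) (hn : 0 < n)
    (hmo : Odd m) (hno : Odd n) (hmn : Nat.Coprime m n) :
    G j (m * n) = G j m * G j n :=
  G_multiplicative_general j m n hmo hno hmn
end

section
/- For every s ∈ ℂ with Re(s) > 0, one has the identity Σ_{α ≥ 1, α odd} (μ(α)/α²) · Σ_{m ≥ 1, gcd(m,2α)=1} φ(m²)/m^{3+s} = (ζ(1+s)/ζ(2+s)) · ((1 − 2^{−1−s})/(1 − 2^{−2−s})) · ∏_{p odd prime} (1 − p^{−2}·(1 − p^{−1−s})/(1 − p^{−2−s})); all the series and the product converge absolutely in this region. -/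
/-!
Everything is an Euler product. The summand `m ↦ φ(m²)/m^{3+s}` is multiplicative with local
factor `(1 - p^{-2-s})/(1 - p^{-1-s}) = A_p⁻¹`, where `A_p = (1 - p^{-1-s})/(1 - p^{-2-s})`; so
its sum is `ζ(1+s)/ζ(2+s)`, and restricting to `m` coprime to `2α` multiplies the sum by
`∏_{p ∣ 2α} A_p`. The `α`-series is therefore `ζ(1+s)/ζ(2+s) · A_2` times the sum of the
multiplicative function `α ↦ [α odd] μ(α) α⁻² ∏_{p ∣ α} A_p`, whose local factor is
`1 - p⁻² A_p` at odd `p` and `1` at `p = 2`. Absolute convergence follows from `φ(m²) ≤ m²` and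
from `‖A_p‖ ≤ 3/2 ≤ √p` for odd `p`, which bounds the `α`-th term by `α^{-3/2}`.
-/

open ArithmeticFunction

lemma norm_natCast_cpow_lt_one {n : ℕ} (hn : 2 ≤ n) {c : ℂ} (hc : c.re < 0) :
    ‖(n : ℂ) ^ c‖ < 1 := by
  rw [Complex.norm_natCast_cpow_of_pos (by omega)]
  exact Real.rpow_lt_one_of_one_lt_of_neg (by exact_mod_cast hn) hc

lemma one_sub_natCast_cpow_ne_zero {n : ℕ} (hn : 2 ≤ n) {c : ℂ} (hc : c.re < 0) :
    1 - (n : ℂ) ^ c ≠ 0 :=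
  sub_ne_zero.mpr fun h => by simpa [← h] using norm_natCast_cpow_lt_one hn hc

lemma norm_natCast_cpow_le_inv_pow {n : ℕ} (hn : 1 ≤ n) {c : ℂ} {k : ℕ} (hc : c.re ≤ -k) :
    ‖(n : ℂ) ^ c‖ ≤ ((n : ℝ) ^ k)⁻¹ := by
  rw [Complex.norm_natCast_cpow_of_pos hn, ← Real.rpow_natCast, ← Real.rpow_neg (by positivity)]
  exact Real.rpow_le_rpow_of_exponent_le (by exact_mod_cast hn) hc

lemma Odd.three_le_of_mem_primeFactors {n p : ℕ} (hn : Odd n) (hp : p ∈ n.primeFactors) :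
    3 ≤ p :=
  (Nat.prime_of_mem_primeFactors hp).two_le.lt_of_ne' fun h2 =>
    Nat.two_dvd_ne_zero.mpr (Nat.odd_iff.mp hn) (h2 ▸ Nat.dvd_of_mem_primeFactors hp)

lemma norm_prod_primeFactors_le_sqrt {𝕜 : Type*} [NormedField 𝕜] {n : ℕ} (hn : n ≠ 0) {F : ℕ → 𝕜}
    (hF : ∀ p ∈ n.primeFactors, ‖F p‖ ≤ √p) : ‖∏ p ∈ n.primeFactors, F p‖ ≤ √n := by
  have hrad : (∏ p ∈ n.primeFactors, (p : ℝ)) ≤ n := by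
    rw [← Nat.cast_prod]
    exact_mod_cast Nat.le_of_dvd (Nat.pos_of_ne_zero hn) (Nat.prod_primeFactors_dvd n)
  calc ‖∏ p ∈ n.primeFactors, F p‖ = ∏ p ∈ n.primeFactors, ‖F p‖ := norm_prod _ _
    _ ≤ ∏ p ∈ n.primeFactors, √p := Finset.prod_le_prod (fun _ _ => norm_nonneg _) hF
    _ = √(∏ p ∈ n.primeFactors, (p : ℝ)) := (Real.sqrt_prod _ fun _ _ => by positivity).symm
    _ ≤ √n := Real.sqrt_le_sqrt hrad

lemma summable_norm_ite {E : Type*} [SeminormedAddCommGroup E] {f : ℕ → E} (P : ℕ → Prop)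
    [DecidablePred P] (hsum : Summable (‖f ·‖)) : Summable fun m => ‖if P m then f m else 0‖ :=
  hsum.of_nonneg_of_le (fun _ => norm_nonneg _) fun m => by split_ifs <;> simp

section EulerProduct

variable {R : Type*} [NormedCommRing R] [CompleteSpace R] {f : ℕ → R}

theorem tsum_ite_coprime_mul_prod_primeFactors (hf₁ : f 1 = 1)
    (hmul : ∀ {m n}, m.Coprime n → f (m * n) = f m * f n) (hsum : Summable (‖f ·‖))
    (hf₀ : f 0 = 0) {N : ℕ} (hN : N ≠ 0) :
    (∑' m, if m.Coprime N then f m else 0) * ∏ p ∈ N.primeFactors, ∑' e, f (p ^ e) =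
      ∑' m, f m := by
  set f' : ℕ → R := fun m => if m.Coprime N then f m else 0 with hf'
  have hf'mul {m n : ℕ} (hmn : m.Coprime n) : f' (m * n) = f' m * f' n := by
    simp only [hf', Nat.coprime_mul_iff_left, ite_zero_mul_ite_zero, hmul hmn]
  have hf'sum : Summable (‖f' ·‖) := summable_norm_ite _ hsum
  have hlocal {p : ℕ} (hp : p.Prime) :
      ∑' e, f' (p ^ e) = if p ∣ N then 1 else ∑' e, f (p ^ e) := by
    split_ifs with hpN
    · rw [tsum_eq_single 0 fun e he => if_neg fun h =>
        hp.one_lt.ne' (Nat.Coprime.eq_one_of_dvd (h.coprime_dvd_left (dvd_pow_self p he)) hpN)]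
      simp [hf₁]
    · exact tsum_congr fun e => if_pos ((hp.coprime_iff_not_dvd.mpr hpN).pow_left e)
  have hfinite : HasProd ((N.primeFactors : Set ℕ).mulIndicator fun p => ∑' e, f (p ^ e))
      (∏ p ∈ N.primeFactors, ∑' e, f (p ^ e)) :=
    hasProd_subtype_iff_mulIndicator.mp (Finset.hasProd _ _)
  refine ((EulerProduct.eulerProduct_hasProd_mulIndicator (by simp [hf', hf₁]) hf'mul hf'sum
    (by simp [hf', hf₀])).mul hfinite).unique ?_
  convert EulerProduct.eulerProduct_hasProd_mulIndicator hf₁ hmul hsum hf₀ using 1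
  ext p
  by_cases hp : p.Prime
  · by_cases hpN : p ∣ N <;>
      simp [hp, hpN, hlocal hp, Nat.mem_primeFactors, hN]
  · simp [hp, Nat.mem_primeFactors]

end EulerProduct

noncomputable def totientSqSummand (s : ℂ) (m : ℕ) : ℂ :=
  (Nat.totient (m ^ 2) : ℂ) / (m : ℂ) ^ ((3 : ℂ) + s)

noncomputable def eulerRatio (s : ℂ) (p : ℕ) : ℂ :=
  (1 - (p : ℂ) ^ (-(1 : ℂ) - s)) / (1 - (p : ℂ) ^ (-(2 : ℂ) - s))

section

variable {s : ℂ}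

lemma eulerRatio_ne_zero (hs : 0 < s.re) {p : ℕ} (hp : 2 ≤ p) : eulerRatio s p ≠ 0 := by
  refine div_ne_zero (one_sub_natCast_cpow_ne_zero hp ?_) (one_sub_natCast_cpow_ne_zero hp ?_) <;>
    simp only [Complex.sub_re, Complex.neg_re, Complex.one_re, Complex.re_ofNat] <;> linarith

lemma totientSqSummand_zero : totientSqSummand s 0 = 0 := by
  simp [totientSqSummand]

lemma totientSqSummand_one : totientSqSummand s 1 = 1 := by
  simp [totientSqSummand]

lemma totientSqSummand_mul {m n : ℕ} (hmn : m.Coprime n) :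
    totientSqSummand s (m * n) = totientSqSummand s m * totientSqSummand s n := by
  simp only [totientSqSummand, mul_pow, Nat.totient_mul (hmn.pow 2 2), Nat.cast_mul,
    Complex.natCast_mul_natCast_cpow, div_mul_div_comm]

lemma norm_totientSqSummand_le (m : ℕ) :
    ‖totientSqSummand s m‖ ≤ ((m : ℝ) ^ (1 + s.re))⁻¹ := by
  rcases Nat.eq_zero_or_pos m with rfl | hm
  · simp only [totientSqSummand_zero, norm_zero]
    positivity
  have hm' : (0 : ℝ) < m := by exact_mod_cast hm
  have htot : (Nat.totient (m ^ 2) : ℝ) ≤ (m : ℝ) ^ (2 : ℝ) := by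
    exact_mod_cast Nat.totient_le (m ^ 2)
  rw [totientSqSummand, norm_div, Complex.norm_natCast, Complex.norm_natCast_cpow_of_pos hm,
    div_le_iff₀ (by positivity), show ((3 : ℂ) + s).re = (1 + s.re) + 2 by
      simp only [Complex.add_re, Complex.re_ofNat]; ring,
    Real.rpow_add hm' (1 + s.re) 2, inv_mul_cancel_left₀ (by positivity)]
  exact htot

lemma summable_norm_totientSqSummand (hs : 0 < s.re) : Summable (‖totientSqSummand s ·‖) :=
  (Real.summable_nat_rpow_inv.mpr (by linarith)).of_nonneg_of_le (fun _ => norm_nonneg _)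
    norm_totientSqSummand_le

lemma totientSqSummand_prime_pow_succ {p : ℕ} (hp : p.Prime) (e : ℕ) :
    totientSqSummand s (p ^ (e + 1)) = (1 - (p : ℂ)⁻¹) * ((p : ℂ) ^ (-(1 : ℂ) - s)) ^ (e + 1) := by
  have hp0 : (p : ℂ) ≠ 0 := Nat.cast_ne_zero.mpr hp.ne_zero
  have htot :
      (Nat.totient ((p ^ (e + 1)) ^ 2) : ℂ) = (1 - (p : ℂ)⁻¹) * ((p : ℂ) ^ 2) ^ (e + 1) := by
    rw [← pow_mul, show (e + 1) * 2 = 2 * e + 1 + 1 by ring, Nat.totient_prime_pow_succ hp,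
      Nat.cast_mul, Nat.cast_sub hp.one_le]
    field_simp
    push_cast
    ring
  have hden : ((p ^ (e + 1) : ℕ) : ℂ) ^ ((3 : ℂ) + s) = ((p : ℂ) ^ ((3 : ℂ) + s)) ^ (e + 1) := by
    rw [← Complex.cpow_nat_mul, Complex.natCast_cpow_natCast_mul, Nat.cast_pow]
  have hratio : (p : ℂ) ^ 2 / (p : ℂ) ^ ((3 : ℂ) + s) = (p : ℂ) ^ (-(1 : ℂ) - s) := by
    rw [← Complex.cpow_ofNat, ← Complex.cpow_sub _ _ hp0]
    ring_nf
  rw [totientSqSummand, htot, hden, mul_div_assoc, ← div_pow, hratio]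

lemma tsum_totientSqSummand_prime_pow (hs : 0 < s.re) {p : ℕ} (hp : p.Prime) :
    ∑' e, totientSqSummand s (p ^ e) = (eulerRatio s p)⁻¹ := by
  have hp0 : (p : ℂ) ≠ 0 := Nat.cast_ne_zero.mpr hp.ne_zero
  set x := (p : ℂ) ^ (-(1 : ℂ) - s) with hx
  have hre : (-(1 : ℂ) - s).re < 0 := by
    simp only [Complex.sub_re, Complex.neg_re, Complex.one_re]; linarith
  have hx1 : ‖x‖ < 1 := norm_natCast_cpow_lt_one hp.two_le hre
  have hx0 : 1 - x ≠ 0 := one_sub_natCast_cpow_ne_zero hp.two_le hre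
  have hy : (p : ℂ) ^ (-(2 : ℂ) - s) = (p : ℂ)⁻¹ * x := by
    rw [hx, ← Complex.cpow_neg_one, ← Complex.cpow_add _ _ hp0]
    ring_nf
  have hsum : Summable fun e => totientSqSummand s (p ^ e) :=
    (summable_norm_totientSqSummand hs).of_norm.comp_injective (Nat.pow_right_injective hp.two_le)
  rw [hsum.tsum_eq_zero_add, pow_zero, totientSqSummand_one]
  simp only [totientSqSummand_prime_pow_succ hp, ← hx]
  simp only [pow_succ', tsum_mul_left, tsum_geometric_of_norm_lt_one hx1, eulerRatio, inv_div, hy,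
    ← hx]
  field_simp
  ring

lemma tsum_totientSqSummand (hs : 0 < s.re) :
    ∑' m, totientSqSummand s m = riemannZeta (1 + s) / riemannZeta (2 + s) := by
  have h1 : 1 < (1 + s).re := by simp only [Complex.add_re, Complex.one_re]; linarith
  have h2 : 1 < (2 + s).re := by simp only [Complex.add_re, Complex.re_ofNat]; linarith
  rw [eq_div_iff (riemannZeta_ne_zero_of_one_lt_re h2)]
  refine ((EulerProduct.eulerProduct_hasProd totientSqSummand_one totientSqSummand_mul
    (summable_norm_totientSqSummand hs) totientSqSummand_zero).mul
    (riemannZeta_eulerProduct_hasProd h2)).unique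
    ((riemannZeta_eulerProduct_hasProd h1).congr_fun fun p => ?_)
  have hy : 1 - (p : ℂ) ^ (-(2 : ℂ) - s) ≠ 0 :=
    one_sub_natCast_cpow_ne_zero p.prop.two_le <| by
      simp only [Complex.sub_re, Complex.neg_re, Complex.re_ofNat]; linarith
  rw [tsum_totientSqSummand_prime_pow hs p.prop, eulerRatio, inv_div, neg_add', neg_add',
    div_mul_eq_mul_div, mul_inv_cancel₀ hy, one_div]

lemma tsum_ite_coprime_totientSqSummand (hs : 0 < s.re) {N : ℕ} (hN : N ≠ 0) :
    ∑' m, (if m.Coprime N then totientSqSummand s m else 0) =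
      riemannZeta (1 + s) / riemannZeta (2 + s) * ∏ p ∈ N.primeFactors, eulerRatio s p := by
  rw [← tsum_totientSqSummand hs, ← tsum_ite_coprime_mul_prod_primeFactors totientSqSummand_one
    totientSqSummand_mul (summable_norm_totientSqSummand hs) totientSqSummand_zero hN,
    Finset.prod_congr rfl fun p hp =>
      tsum_totientSqSummand_prime_pow hs (Nat.prime_of_mem_primeFactors hp),
    Finset.prod_inv_distrib, inv_mul_cancel_right₀]
  exact Finset.prod_ne_zero_iff.mpr fun p hp =>
    eulerRatio_ne_zero hs (Nat.prime_of_mem_primeFactors hp).two_le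

lemma norm_eulerRatio_le_sqrt (hs : 0 < s.re) {n : ℕ} (hn : 3 ≤ n) :
    ‖eulerRatio s n‖ ≤ √n := by
  have hn' : (3 : ℝ) ≤ n := by exact_mod_cast hn
  have hx := norm_natCast_cpow_le_inv_pow (n := n) (c := -(1 : ℂ) - s) (k := 1) (by omega)
    (by simp only [Complex.sub_re, Complex.neg_re, Complex.one_re, Nat.cast_one]; linarith)
  have hy := norm_natCast_cpow_le_inv_pow (n := n) (c := -(2 : ℂ) - s) (k := 2) (by omega)
    (by simp only [Complex.sub_re, Complex.neg_re, Complex.re_ofNat, Nat.cast_ofNat]; linarith)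
  have hx3 : ((n : ℝ) ^ 1)⁻¹ ≤ 3⁻¹ := by rw [pow_one]; exact inv_anti₀ (by norm_num) hn'
  have hy9 : ((n : ℝ) ^ 2)⁻¹ ≤ 9⁻¹ := inv_anti₀ (by norm_num) (by nlinarith)
  have hnum : ‖1 - (n : ℂ) ^ (-(1 : ℂ) - s)‖ ≤ 4 / 3 :=
    (norm_sub_le _ _).trans (by rw [norm_one]; linarith)
  have hden : 8 / 9 ≤ ‖1 - (n : ℂ) ^ (-(2 : ℂ) - s)‖ :=
    le_trans (by rw [norm_one]; linarith) (norm_sub_norm_le _ _)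
  calc ‖eulerRatio s n‖ ≤ (4 / 3) / (8 / 9) := by
        rw [eulerRatio, norm_div]; exact div_le_div₀ (by norm_num) hnum (by norm_num) hden
    _ ≤ √3 := (Real.le_sqrt (by norm_num) (by norm_num)).mpr (by norm_num)
    _ ≤ √n := Real.sqrt_le_sqrt hn'

end

noncomputable def oddMoebiusSummand (s : ℂ) (α : ℕ) : ℂ :=
  if Odd α then (moebius α : ℂ) / (α : ℂ) ^ 2 * ∏ p ∈ α.primeFactors, eulerRatio s p else 0

section

variable {s : ℂ}

lemma oddMoebiusSummand_zero : oddMoebiusSummand s 0 = 0 := by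
  simp [oddMoebiusSummand]

lemma oddMoebiusSummand_one : oddMoebiusSummand s 1 = 1 := by
  simp [oddMoebiusSummand]

lemma oddMoebiusSummand_mul {m n : ℕ} (hmn : m.Coprime n) :
    oddMoebiusSummand s (m * n) = oddMoebiusSummand s m * oddMoebiusSummand s n := by
  rcases eq_or_ne m 0 with rfl | hm
  · simp [(Nat.coprime_zero_left n).mp hmn, oddMoebiusSummand_zero]
  rcases eq_or_ne n 0 with rfl | hn
  · simp [(Nat.coprime_zero_right m).mp hmn, oddMoebiusSummand_zero]
  simp only [oddMoebiusSummand, Nat.odd_mul, ite_zero_mul_ite_zero, Nat.primeFactors_mul hm hn,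
    Finset.prod_union hmn.disjoint_primeFactors, isMultiplicative_moebius.map_mul_of_coprime hmn]
  congr 1
  push_cast
  ring

lemma tsum_oddMoebiusSummand_prime_pow {p : ℕ} (hp : p.Prime) :
    ∑' e, oddMoebiusSummand s (p ^ e) = 1 + oddMoebiusSummand s p := by
  rw [tsum_eq_sum (s := Finset.range 2) fun e he => ?_]
  · simp [Finset.sum_range_succ, oddMoebiusSummand_one]
  have he : 1 < e := by simpa using he
  simp [oddMoebiusSummand, moebius_apply_prime_pow hp (by omega : e ≠ 0), show e ≠ 1 by omega]

lemma oddMoebiusSummand_prime {p : ℕ} (hp : p.Prime) (hodd : Odd p) :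
    oddMoebiusSummand s p = -((p : ℂ) ^ (-(2 : ℂ)) * eulerRatio s p) := by
  rw [oddMoebiusSummand, if_pos hodd, moebius_apply_prime hp, hp.primeFactors,
    Finset.prod_singleton, Complex.cpow_neg, Complex.cpow_ofNat]
  push_cast
  ring

lemma oddMoebiusSummand_two : oddMoebiusSummand s 2 = 0 := by
  simp [oddMoebiusSummand]

lemma norm_oddMoebiusSummand_le (hs : 0 < s.re) (α : ℕ) :
    ‖oddMoebiusSummand s α‖ ≤ ((α : ℝ) ^ (3 / 2 : ℝ))⁻¹ := by
  unfold oddMoebiusSummand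
  split_ifs with hα
  swap
  · rw [norm_zero]; positivity
  have hα0 : α ≠ 0 := hα.pos.ne'
  have hα' : (0 : ℝ) < α := by exact_mod_cast hα.pos
  have hμ : ‖(moebius α : ℂ)‖ ≤ 1 := by
    rw [Complex.norm_intCast]; exact_mod_cast abs_moebius_le_one
  have hprod : ‖∏ p ∈ α.primeFactors, eulerRatio s p‖ ≤ √α :=
    norm_prod_primeFactors_le_sqrt hα0 fun p hp =>
      norm_eulerRatio_le_sqrt hs (hα.three_le_of_mem_primeFactors hp)
  have hpow : (α : ℝ) ^ 2 = (α : ℝ) ^ (3 / 2 : ℝ) * √α := by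
    rw [Real.sqrt_eq_rpow, ← Real.rpow_add hα', ← Real.rpow_natCast]; norm_num
  calc ‖(moebius α : ℂ) / (α : ℂ) ^ 2 * ∏ p ∈ α.primeFactors, eulerRatio s p‖
      ≤ 1 / (α : ℝ) ^ 2 * √α := by
        rw [norm_mul, norm_div, norm_pow, Complex.norm_natCast]
        gcongr
    _ = ((α : ℝ) ^ (3 / 2 : ℝ))⁻¹ := by
        rw [hpow]; field_simp

lemma summable_norm_oddMoebiusSummand (hs : 0 < s.re) : Summable (‖oddMoebiusSummand s ·‖) :=
  (Real.summable_nat_rpow_inv.mpr (by norm_num)).of_nonneg_of_le (fun _ => norm_nonneg _)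
    (norm_oddMoebiusSummand_le hs)

lemma hasProd_oddMoebiusSummand (hs : 0 < s.re) :
    HasProd (fun p : {p : ℕ // p.Prime ∧ Odd p} => 1 - (p.1 : ℂ) ^ (-(2 : ℂ)) * eulerRatio s p)
      (∑' α, oddMoebiusSummand s α) := by
  refine (hasProd_subtype_iff_mulIndicator (s := {p : ℕ | p.Prime ∧ Odd p})
    (f := fun p : ℕ => 1 - (p : ℂ) ^ (-(2 : ℂ)) * eulerRatio s p)).mpr
    ((EulerProduct.eulerProduct_hasProd_mulIndicator oddMoebiusSummand_one oddMoebiusSummand_mul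
      (summable_norm_oddMoebiusSummand hs) oddMoebiusSummand_zero).congr_fun fun p => ?_)
  by_cases hp : p.Prime
  · rw [Set.mulIndicator_of_mem (show p ∈ {p | p.Prime} from hp),
      tsum_oddMoebiusSummand_prime_pow hp]
    rcases hp.eq_two_or_odd' with rfl | hodd
    · rw [Set.mulIndicator_of_notMem fun h => Nat.not_odd_iff_even.mpr even_two h.2,
        oddMoebiusSummand_two, add_zero]
    · rw [Set.mulIndicator_of_mem (show p ∈ {p | p.Prime ∧ Odd p} from ⟨hp, hodd⟩),
        oddMoebiusSummand_prime hp hodd, sub_eq_add_neg]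
  · rw [Set.mulIndicator_of_notMem fun h => hp h.1,
      Set.mulIndicator_of_notMem (show p ∉ {p | p.Prime} from hp)]

lemma moebius_div_sq_mul_tsum_coprime_two_mul (hs : 0 < s.re) (α : ℕ) :
    (if Odd α then (moebius α : ℂ) / (α : ℂ) ^ 2 *
        ∑' m, (if m.Coprime (2 * α) then totientSqSummand s m else 0) else 0) =
      riemannZeta (1 + s) / riemannZeta (2 + s) * eulerRatio s 2 * oddMoebiusSummand s α := by
  unfold oddMoebiusSummand
  split_ifs with hα
  · have hα0 : α ≠ 0 := hα.pos.ne'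
    have h2 : 2 ∉ α.primeFactors := fun h => by
      have := hα.three_le_of_mem_primeFactors h; omega
    rw [tsum_ite_coprime_totientSqSummand hs (mul_ne_zero two_ne_zero hα0),
      Nat.primeFactors_mul two_ne_zero hα0, Nat.prime_two.primeFactors, Finset.singleton_union,
      Finset.prod_insert h2]
    ring
  · rw [mul_zero]

end

/-- The Dirichlet series identity
`∑_{α odd} (μ(α)/α²) ∑_{(m,2α)=1} φ(m²)/m^{3+s}
  = (ζ(1+s)/ζ(2+s)) ((1−2^{−1−s})/(1−2^{−2−s})) ∏_{p odd} (1 − p^{−2}(1−p^{−1−s})/(1−p^{−2−s}))`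
for `Re(s) > 0`, with absolute convergence of all series and the product. -/
theorem dirichlet_series_identity_one (s : ℂ) (hs : 0 < s.re) :
    (∀ α : ℕ, Odd α → Summable (fun m : ℕ =>
      ‖if Nat.Coprime m (2 * α) then
          (Nat.totient (m ^ 2) : ℂ) / (m : ℂ) ^ ((3 : ℂ) + s) else 0‖)) ∧
    Summable (fun α : ℕ => ‖if Odd α then
        ((ArithmeticFunction.moebius α : ℂ) / (α : ℂ) ^ 2) *
          ∑' m : ℕ, (if Nat.Coprime m (2 * α) then
            (Nat.totient (m ^ 2) : ℂ) / (m : ℂ) ^ ((3 : ℂ) + s) else 0)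
      else 0‖) ∧
    Multipliable (fun p : {p : ℕ // p.Prime ∧ Odd p} =>
      (1 : ℂ) - (p.1 : ℂ) ^ (-(2 : ℂ)) *
        ((1 - (p.1 : ℂ) ^ (-(1 : ℂ) - s)) / (1 - (p.1 : ℂ) ^ (-(2 : ℂ) - s)))) ∧
    (∑' α : ℕ, (if Odd α then
        ((ArithmeticFunction.moebius α : ℂ) / (α : ℂ) ^ 2) *
          ∑' m : ℕ, (if Nat.Coprime m (2 * α) then
            (Nat.totient (m ^ 2) : ℂ) / (m : ℂ) ^ ((3 : ℂ) + s) else 0)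
      else 0))
      = (riemannZeta (1 + s) / riemannZeta (2 + s)) *
        ((1 - (2 : ℂ) ^ (-(1 : ℂ) - s)) / (1 - (2 : ℂ) ^ (-(2 : ℂ) - s))) *
        ∏' p : {p : ℕ // p.Prime ∧ Odd p},
          ((1 : ℂ) - (p.1 : ℂ) ^ (-(2 : ℂ)) *
            ((1 - (p.1 : ℂ) ^ (-(1 : ℂ) - s)) / (1 - (p.1 : ℂ) ^ (-(2 : ℂ) - s)))) := by
  have hterm := moebius_div_sq_mul_tsum_coprime_two_mul hs
  have hprod := hasProd_oddMoebiusSummand hs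
  refine ⟨fun α _ => summable_norm_ite _ (summable_norm_totientSqSummand hs), ?_,
    hprod.multipliable, ?_⟩
  · exact ((summable_norm_oddMoebiusSummand hs).mul_left _).congr fun α => by
      rw [← norm_mul, ← hterm]
      rfl
  · refine (tsum_congr hterm).trans ?_
    rw [tsum_mul_left, ← hprod.tprod_eq, eulerRatio, Nat.cast_ofNat]
    rfl
end

section
/- For every s ∈ ℂ with Re(s) > 1, one has the identity Σ_{α ≥ 1, α odd} μ(α) · Σ_{d ≥ 1, d odd, α² | d} φ(d)/d^{1+s} = (ζ(s)/ζ(1+s)) · ((1 − 2^{−s})/(1 − 2^{−s−1})) · ∏_{p odd prime} (1 − p^{−s−1} − p^{−2s}(1 − p^{−1}))·(1 − p^{−s−1})^{−1}; all the series and the product converge absolutely in this region. -/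
/-!
Exchanging the two sums, the inner sum `∑_{α² ∣ d} μ(α)` is the indicator of squarefree `d`,
so the left side is `∑_{d odd squarefree} φ(d) / d^{1+s}`, whose Euler product has the factors
`1 + (p - 1) / p^{1+s}`. Multiplying these by `1 - p^{-s}` and dividing by `1 - p^{-s-1}` costs
the odd parts `(1 - 2^{-s}) ζ(s)` and `(1 - 2^{-s-1}) ζ(1 + s)` of the two zeta functions.
-/

open ArithmeticFunction
open scoped ArithmeticFunction.Moebius

theorem Nat.dvd_of_sq_dvd_sq_mul {a b c : ℕ} (ha : Squarefree a) (h : c ^ 2 ∣ b ^ 2 * a) :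
    c ∣ b := by
  rcases Nat.eq_zero_or_pos (c.gcd b) with hg | hg
  · rw [(Nat.gcd_eq_zero_iff.mp hg).2]
    exact dvd_zero c
  obtain ⟨g, c', b', hg, hcop, rfl, rfl⟩ := Nat.exists_coprime' hg
  have h' : c' ^ 2 ∣ b' ^ 2 * a := by
    rw [mul_pow, mul_pow, mul_right_comm] at h
    exact (Nat.mul_dvd_mul_iff_right (by positivity)).mp h
  have hc' : c' * c' ∣ a := sq c' ▸ (hcop.pow 2 2).dvd_of_dvd_mul_left h'
  rw [Nat.isUnit_iff.mp (ha c' hc'), one_mul]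
  exact Dvd.intro_left b' rfl

theorem Nat.filter_sq_dvd_divisors_sq_mul {a b : ℕ} (ha : Squarefree a) (hb : b ≠ 0) :
    {c ∈ (b ^ 2 * a).divisors | c ^ 2 ∣ b ^ 2 * a} = b.divisors := by
  ext c
  simp only [Finset.mem_filter, Nat.mem_divisors]
  constructor
  · rintro ⟨-, h⟩
    exact ⟨Nat.dvd_of_sq_dvd_sq_mul ha h, hb⟩
  · rintro ⟨h, -⟩
    have h2 : c ^ 2 ∣ b ^ 2 * a := (pow_dvd_pow_of_dvd h 2).mul_right a
    exact ⟨⟨(dvd_pow_self c two_ne_zero).trans h2, mul_ne_zero (pow_ne_zero 2 hb) ha.ne_zero⟩, h2⟩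

theorem ArithmeticFunction.sum_moebius_sq_dvd {n : ℕ} (hn : n ≠ 0) :
    ∑ c ∈ n.divisors with c ^ 2 ∣ n, μ c = if Squarefree n then 1 else 0 := by
  obtain ⟨a, b, rfl, ha⟩ := Nat.sq_mul_squarefree n
  have hb : b ≠ 0 := by rintro rfl; simp at hn
  have hsq : Squarefree (b ^ 2 * a) ↔ b = 1 := by
    refine ⟨fun h => Nat.isUnit_iff.mp (h b ⟨a, by ring⟩), ?_⟩
    rintro rfl
    simpa using ha
  rw [Nat.filter_sq_dvd_divisors_sq_mul ha hb, ← coe_mul_zeta_apply, moebius_mul_coe_zeta,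
    one_apply]
  simp only [hsq]

theorem norm_totient_div_cpow_le (s : ℂ) (n : ℕ) :
    ‖(n.totient : ℂ) / (n : ℂ) ^ (1 + s)‖ ≤ (n : ℝ) ^ (-s.re) := by
  rcases n.eq_zero_or_pos with rfl | hn
  · simp only [Nat.totient_zero, Nat.cast_zero, zero_div, norm_zero]
    positivity
  have hn' : (0 : ℝ) < n := Nat.cast_pos.mpr hn
  rw [norm_div, Complex.norm_natCast_cpow_of_pos hn, Complex.norm_natCast,
    div_le_iff₀ (by positivity), ← Real.rpow_add hn', Complex.add_re, Complex.one_re,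
    show -s.re + (1 + s.re) = 1 by ring, Real.rpow_one]
  exact_mod_cast Nat.totient_le n

theorem summable_norm_ite_totient_div_cpow {s : ℂ} (hs : 1 < s.re) (P : ℕ → Prop)
    [DecidablePred P] :
    Summable fun n : ℕ => ‖if P n then (n.totient : ℂ) / (n : ℂ) ^ (1 + s) else 0‖ := by
  refine (Real.summable_nat_rpow.mpr (by linarith : -s.re < -1)).of_nonneg_of_le
    (fun _ => norm_nonneg _) fun n => ?_
  split_ifs
  · exact norm_totient_div_cpow_le s n
  · rw [norm_zero]
    positivity

theorem norm_moebius_le_one (n : ℕ) : ‖(μ n : ℂ)‖ ≤ 1 := by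
  rw [Complex.norm_intCast]
  exact_mod_cast abs_moebius_le_one

noncomputable def doubleSeriesTerm (s : ℂ) (α d : ℕ) : ℂ :=
  if Odd α ∧ Odd d ∧ α ^ 2 ∣ d then μ α * ((d.totient : ℂ) / (d : ℂ) ^ (1 + s)) else 0

theorem norm_doubleSeriesTerm_le (s : ℂ) (α d : ℕ) :
    ‖doubleSeriesTerm s α d‖ ≤ (d : ℝ) ^ (-s.re) := by
  unfold doubleSeriesTerm
  split_ifs
  · rw [norm_mul, ← one_mul ((d : ℝ) ^ (-s.re))]
    exact mul_le_mul (norm_moebius_le_one α) (norm_totient_div_cpow_le s d) (norm_nonneg _)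
      zero_le_one
  · rw [norm_zero]
    positivity

theorem summable_norm_doubleSeriesTerm {s : ℂ} (hs : 1 < s.re) :
    Summable fun x : ℕ × ℕ => ‖doubleSeriesTerm s x.1 x.2‖ := by
  -- the nonzero terms sit at the pairs `(a + 1, (a + 1) ^ 2 * m)`
  let e : ℕ × ℕ → ℕ × ℕ := fun x => (x.1 + 1, (x.1 + 1) ^ 2 * x.2)
  have he : Function.Injective e := by
    rintro ⟨a, m⟩ ⟨a', m'⟩ h
    simp only [e, Prod.mk.injEq, add_left_inj] at h
    obtain ⟨rfl, h⟩ := h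
    exact Prod.ext rfl (Nat.eq_of_mul_eq_mul_left (by positivity) h)
  have hsupp : ∀ x ∉ Set.range e, ‖doubleSeriesTerm s x.1 x.2‖ = 0 := by
    rintro ⟨α, d⟩ hx
    rw [norm_eq_zero, doubleSeriesTerm, if_neg]
    rintro ⟨hα, -, m, hm : d = α ^ 2 * m⟩
    subst hm
    obtain ⟨a, rfl⟩ := Nat.exists_eq_add_one.mpr hα.pos
    exact hx ⟨(a, m), rfl⟩
  rw [← he.summable_iff hsupp]
  have hsq : Summable fun a : ℕ => (((a + 1 : ℕ) : ℝ) ^ 2) ^ (-s.re) := by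
    refine ((summable_nat_add_iff 1).mpr
      (Real.summable_nat_rpow.mpr (by linarith : 2 * -s.re < -1))).congr fun a => ?_
    rw [← Real.rpow_natCast_mul (Nat.cast_nonneg _), Nat.cast_ofNat]
  have hrow : Summable fun m : ℕ => (m : ℝ) ^ (-s.re) := Real.summable_nat_rpow.mpr (by linarith)
  refine (hsq.mul_of_nonneg hrow (fun _ => by positivity) (fun _ => by positivity)).of_nonneg_of_le
    (fun _ => norm_nonneg _) fun x => (norm_doubleSeriesTerm_le s _ _).trans_eq ?_
  simp only [e, Nat.cast_mul, Nat.cast_pow]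
  exact Real.mul_rpow (by positivity) (by positivity)

theorem tsum_doubleSeriesTerm_snd (s : ℂ) (α : ℕ) :
    ∑' d, doubleSeriesTerm s α d = if Odd α then μ α * ∑' d : ℕ,
      (if Odd d ∧ α ^ 2 ∣ d then (d.totient : ℂ) / (d : ℂ) ^ (1 + s) else 0) else 0 := by
  split_ifs with hα
  · rw [← tsum_mul_left]
    exact tsum_congr fun d => by simp only [doubleSeriesTerm, hα, true_and, mul_ite, mul_zero]
  · simp [doubleSeriesTerm, hα]

noncomputable def oddSquarefreeTerm (s : ℂ) (n : ℕ) : ℂ :=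
  if Odd n ∧ Squarefree n then (n.totient : ℂ) / (n : ℂ) ^ (1 + s) else 0

theorem tsum_doubleSeriesTerm_fst (s : ℂ) (d : ℕ) :
    ∑' α, doubleSeriesTerm s α d = oddSquarefreeTerm s d := by
  rcases Nat.even_or_odd d with hd | hd
  · simp [doubleSeriesTerm, oddSquarefreeTerm, Nat.not_odd_iff_even.mpr hd]
  have hd0 : d ≠ 0 := hd.pos.ne'
  have hterm : ∀ α, doubleSeriesTerm s α d =
      (if α ^ 2 ∣ d then (μ α : ℂ) else 0) * ((d.totient : ℂ) / (d : ℂ) ^ (1 + s)) := fun α => by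
    by_cases h : α ^ 2 ∣ d
    · have hα : Odd α := hd.of_dvd_nat ((dvd_pow_self α two_ne_zero).trans h)
      simp [doubleSeriesTerm, hα, hd, h]
    · simp [doubleSeriesTerm, h]
  have hsupp : ∀ α ∉ d.divisors, (if α ^ 2 ∣ d then (μ α : ℂ) else 0) = 0 := fun α hα =>
    if_neg fun h => hα (Nat.mem_divisors.mpr ⟨(dvd_pow_self α two_ne_zero).trans h, hd0⟩)
  rw [tsum_congr hterm, tsum_mul_right, tsum_eq_sum hsupp, ← Finset.sum_filter, ← Int.cast_sum,
    sum_moebius_sq_dvd hd0, oddSquarefreeTerm]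
  split_ifs <;> simp_all

theorem tsum_ite_moebius_mul_tsum {s : ℂ} (hs : 1 < s.re) :
    ∑' α : ℕ, (if Odd α then (μ α : ℂ) * ∑' d : ℕ,
      (if Odd d ∧ α ^ 2 ∣ d then (d.totient : ℂ) / (d : ℂ) ^ (1 + s) else 0) else 0) =
      ∑' n, oddSquarefreeTerm s n := by
  have hsum : Summable (Function.uncurry (doubleSeriesTerm s)) :=
    (summable_norm_doubleSeriesTerm hs).of_norm
  rw [tsum_congr fun α => (tsum_doubleSeriesTerm_snd s α).symm, ← hsum.tsum_comm]
  exact tsum_congr (tsum_doubleSeriesTerm_fst s)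

theorem hasProd_one_add_of_squarefree {R : Type*} [NormedCommRing R] [CompleteSpace R]
    {f : ℕ → R} (hf₁ : f 1 = 1) (hmul : ∀ {m n : ℕ}, m.Coprime n → f (m * n) = f m * f n)
    (hsum : Summable (‖f ·‖)) (hsq : ∀ n, ¬Squarefree n → f n = 0) :
    HasProd (fun p : Nat.Primes => 1 + f p) (∑' n, f n) := by
  convert EulerProduct.eulerProduct_hasProd hf₁ hmul hsum (hsq 0 not_squarefree_zero) using 2
    with p
  have hpow : ∀ e ∉ Finset.range 2, f ((p : ℕ) ^ e) = 0 := fun e he =>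
    hsq _ fun h => by
      have := ((Nat.squarefree_pow_iff p.2.ne_one (by simp at he; omega)).mp h).2
      simp [this] at he
  rw [tsum_eq_sum hpow, Finset.sum_range_succ, Finset.sum_range_one, pow_zero, pow_one, hf₁]

abbrev OddPrimes : Type := {p : ℕ // p.Prime ∧ Odd p}

def OddPrimes.toPrimes (p : OddPrimes) : Nat.Primes := ⟨p.1, p.2.1⟩

theorem OddPrimes.toPrimes_injective : Function.Injective OddPrimes.toPrimes := fun _ _ h =>
  Subtype.ext (congrArg (fun r : Nat.Primes => (r : ℕ)) h)

theorem HasProd.comp_toPrimes {M : Type*} [CommMonoid M] [TopologicalSpace M]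
    {f : Nat.Primes → M} {a : M} (h : HasProd f a) (h2 : f ⟨2, Nat.prime_two⟩ = 1) :
    HasProd (f ∘ OddPrimes.toPrimes) a := by
  refine (OddPrimes.toPrimes_injective.hasProd_iff fun p hp => ?_).mpr h
  obtain rfl : p = ⟨2, Nat.prime_two⟩ := Subtype.ext <| by_contra fun hne =>
    hp ⟨⟨p, p.2, p.2.odd_of_ne_two hne⟩, rfl⟩
  exact h2

theorem one_sub_two_cpow_neg_ne_zero {w : ℂ} (hw : 1 < w.re) : (1 : ℂ) - 2 ^ (-w) ≠ 0 := by
  exact_mod_cast Complex.one_sub_prime_cpow_ne_zero Nat.prime_two hw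

theorem hasProd_oddPrimes_riemannZeta {w : ℂ} (hw : 1 < w.re) :
    HasProd (fun p : OddPrimes => (1 - (p.1 : ℂ) ^ (-w))⁻¹) ((1 - 2 ^ (-w)) * riemannZeta w) := by
  have h2 := one_sub_two_cpow_neg_ne_zero hw
  have h := (riemannZeta_eulerProduct_hasProd hw).mul
    (hasProd_ite_eq (⟨2, Nat.prime_two⟩ : Nat.Primes) (1 - 2 ^ (-w)))
  rw [mul_comm]
  convert h.comp_toPrimes (by simp [h2]) using 1
  funext p
  have hp : (p : ℕ) ≠ 2 := fun h => Nat.not_even_iff_odd.mpr p.2.2 (h ▸ even_two)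
  simp [OddPrimes.toPrimes, hp]

theorem oddSquarefreeTerm_mul (s : ℂ) {m n : ℕ} (h : m.Coprime n) :
    oddSquarefreeTerm s (m * n) = oddSquarefreeTerm s m * oddSquarefreeTerm s n := by
  have hmn : Odd (m * n) ∧ Squarefree (m * n) ↔
      (Odd m ∧ Squarefree m) ∧ (Odd n ∧ Squarefree n) := by
    rw [Nat.odd_mul, Nat.squarefree_mul h]
    tauto
  simp only [oddSquarefreeTerm, hmn]
  split_ifs <;> simp_all [Nat.totient_mul h, Complex.natCast_mul_natCast_cpow, mul_div_mul_comm]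

theorem hasProd_oddSquarefreeTerm {s : ℂ} (hs : 1 < s.re) :
    HasProd (fun p : OddPrimes => 1 + (p.1.totient : ℂ) / (p.1 : ℂ) ^ (1 + s))
      (∑' n, oddSquarefreeTerm s n) := by
  have h := hasProd_one_add_of_squarefree (by simp [oddSquarefreeTerm])
    (oddSquarefreeTerm_mul s) (summable_norm_ite_totient_div_cpow hs _)
    fun n hn => by simp [oddSquarefreeTerm, hn]
  convert h.comp_toPrimes (by simp [oddSquarefreeTerm]) using 2 with p
  simp [oddSquarefreeTerm, OddPrimes.toPrimes, p.2.2, p.2.1.prime.squarefree]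

theorem one_add_totient_div_cpow_mul {p : ℕ} (hp : p.Prime) (s : ℂ) :
    (1 + (p.totient : ℂ) / (p : ℂ) ^ (1 + s)) * (1 - (p : ℂ) ^ (-s)) =
      1 - (p : ℂ) ^ (-s - 1) - (p : ℂ) ^ (-(2 : ℂ) * s) * (1 - (p : ℂ)⁻¹) := by
  have hp0 : (p : ℂ) ≠ 0 := Nat.cast_ne_zero.mpr hp.ne_zero
  have htot : (p.totient : ℂ) = p - 1 := by
    rw [Nat.totient_prime hp, Nat.cast_sub hp.one_le, Nat.cast_one]
  have e1 : (p : ℂ) ^ (-s - 1) = (p : ℂ) ^ (-s) * (p : ℂ)⁻¹ := by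
    rw [sub_eq_add_neg, Complex.cpow_add _ _ hp0, Complex.cpow_neg_one]
  have e2 : (p : ℂ) ^ (-(2 : ℂ) * s) = (p : ℂ) ^ (-s) * (p : ℂ) ^ (-s) := by
    rw [show -(2 : ℂ) * s = -s + -s by ring, Complex.cpow_add _ _ hp0]
  have e3 : ((p : ℂ) ^ (1 + s))⁻¹ = (p : ℂ)⁻¹ * (p : ℂ) ^ (-s) := by
    rw [← Complex.cpow_neg, neg_add, Complex.cpow_add _ _ hp0, Complex.cpow_neg_one]
  rw [e1, e2, htot, div_eq_mul_inv, e3]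
  field_simp
  ring

theorem hasProd_oddPrimes_eulerFactor {s : ℂ} (hs : 1 < s.re) :
    HasProd (fun p : OddPrimes =>
      (1 - (p.1 : ℂ) ^ (-s - 1) - (p.1 : ℂ) ^ (-(2 : ℂ) * s) * (1 - (p.1 : ℂ)⁻¹)) *
        (1 - (p.1 : ℂ) ^ (-s - 1))⁻¹)
      ((∑' n, oddSquarefreeTerm s n) * ((1 - 2 ^ (-s)) * riemannZeta s)⁻¹ *
        ((1 - 2 ^ (-s - 1)) * riemannZeta (1 + s))) := by
  have hs₁ : 1 < (1 + s).re := by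
    rw [Complex.add_re, Complex.one_re]
    linarith
  have hZ := (hasProd_oddPrimes_riemannZeta hs).inv₀
    (mul_ne_zero (one_sub_two_cpow_neg_ne_zero hs) (riemannZeta_ne_zero_of_one_lt_re hs))
  have hZ₁ := hasProd_oddPrimes_riemannZeta hs₁
  rw [show -(1 + s) = -s - 1 by ring] at hZ₁
  have h := ((hasProd_oddSquarefreeTerm hs).mul hZ).mul hZ₁
  simpa only [inv_inv, fun p : OddPrimes => one_add_totient_div_cpow_mul p.2.1 s] using h

/-- The Dirichlet series identity
`∑_{α odd} μ(α) ∑_{d odd, α²|d} φ(d)/d^{1+s}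
  = (ζ(s)/ζ(1+s)) ((1−2^{−s})/(1−2^{−s−1}))
      ∏_{p odd} (1 − p^{−s−1} − p^{−2s}(1−p^{−1})) (1 − p^{−s−1})^{−1}`
for `Re(s) > 1`, with absolute convergence of all series and the product. -/
theorem dirichlet_series_identity_two (s : ℂ) (hs : 1 < s.re) :
    (∀ α : ℕ, Odd α → Summable (fun d : ℕ =>
      ‖if Odd d ∧ α ^ 2 ∣ d then (Nat.totient d : ℂ) / (d : ℂ) ^ ((1 : ℂ) + s) else 0‖)) ∧
    Summable (fun α : ℕ => ‖if Odd α then (ArithmeticFunction.moebius α : ℂ) *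
        ∑' d : ℕ, (if Odd d ∧ α ^ 2 ∣ d then
          (Nat.totient d : ℂ) / (d : ℂ) ^ ((1 : ℂ) + s) else 0)
      else 0‖) ∧
    Multipliable (fun p : {p : ℕ // p.Prime ∧ Odd p} =>
      ((1 : ℂ) - (p.1 : ℂ) ^ (-s - 1) - (p.1 : ℂ) ^ (-(2 : ℂ) * s) * (1 - ((p.1 : ℂ))⁻¹)) *
        ((1 : ℂ) - (p.1 : ℂ) ^ (-s - 1))⁻¹) ∧
    (∑' α : ℕ, (if Odd α then (ArithmeticFunction.moebius α : ℂ) *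
        ∑' d : ℕ, (if Odd d ∧ α ^ 2 ∣ d then
          (Nat.totient d : ℂ) / (d : ℂ) ^ ((1 : ℂ) + s) else 0)
      else 0))
      = (riemannZeta s / riemannZeta (1 + s)) *
        ((1 - (2 : ℂ) ^ (-s)) / (1 - (2 : ℂ) ^ (-s - 1))) *
        ∏' p : {p : ℕ // p.Prime ∧ Odd p},
          (((1 : ℂ) - (p.1 : ℂ) ^ (-s - 1) - (p.1 : ℂ) ^ (-(2 : ℂ) * s) * (1 - ((p.1 : ℂ))⁻¹)) *
            ((1 : ℂ) - (p.1 : ℂ) ^ (-s - 1))⁻¹) := by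
  have hsum := summable_norm_doubleSeriesTerm hs
  have hprod := hasProd_oddPrimes_eulerFactor hs
  refine ⟨fun α _ => summable_norm_ite_totient_div_cpow hs _, ?_, hprod.multipliable, ?_⟩
  · simp_rw [← tsum_doubleSeriesTerm_snd]
    exact hsum.prod.of_nonneg_of_le (fun _ => norm_nonneg _)
      fun α => norm_tsum_le_tsum_norm (hsum.prod_factor α)
  · have hs₁ : 1 < (1 + s).re := by
      rw [Complex.add_re, Complex.one_re]
      linarith
    have h2 := one_sub_two_cpow_neg_ne_zero hs
    have h2₁ := one_sub_two_cpow_neg_ne_zero hs₁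
    rw [show -(1 + s) = -s - 1 by ring] at h2₁
    have hζ := riemannZeta_ne_zero_of_one_lt_re hs
    have hζ₁ := riemannZeta_ne_zero_of_one_lt_re hs₁
    rw [tsum_ite_moebius_mul_tsum hs, hprod.tprod_eq]
    field_simp
end

section
/- Let h : ℝ → ℂ be a smooth compactly supported function. For every B > 0 there is a constant C > 0 such that for all real K ≥ 1, |Σ_{j ∈ ℤ} h((2j − 1)/K) − (K/2)·∫_ℝ h(t) dt| ≤ C·K^{−B}. Equivalently, summing over even integers k: Σ_{k ∈ 2ℤ} h((k−1)/K) = (K/2)·ĥ(0) + O_B(K^{−B}), where ĥ(0) = ∫_ℝ h(t) dt. -/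
/-!
Poisson summation turns the sum of `h (a j + b)` over `j ∈ ℤ`, with `a = 2 / K` and `b = -1 / K`,
into `|a|⁻¹` times a sum of unimodular multiples of `ĥ (m / a) = ĥ (K m / 2)` over `m ∈ ℤ`. The term
`m = 0` is `(K / 2) ∫ h`. Since `ĥ` is a Schwartz function, `|ĥ ξ| ≤ C |ξ|⁻ⁿ` for every `n`, so the
terms `m ≠ 0` add up to `O(K · K⁻ⁿ)`.
-/

open MeasureTheory Filter
open scoped FourierTransform ContDiff SchwartzMap

variable {E : Type*} [NormedAddCommGroup E]

theorem MeasureTheory.Measure.integral_comp_mul_add [NormedSpace ℝ E] (g : ℝ → E) {a : ℝ}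
    (ha : a ≠ 0) (b : ℝ) : ∫ x, g (a * x + b) = |a|⁻¹ • ∫ y, g y := by
  calc ∫ x, g (a * x + b) = ∫ x, g (a * (x + b / a)) := by
        simp only [mul_add, mul_div_cancel₀ _ ha]
    _ = ∫ x, g (a * x) := integral_add_right_eq_self (fun x ↦ g (a * x)) (b / a)
    _ = |a|⁻¹ • ∫ y, g y := by rw [Measure.integral_comp_mul_left, abs_inv]

theorem Real.fourier_comp_mul_add [NormedSpace ℂ E] (f : ℝ → E) {a : ℝ} (ha : a ≠ 0)
    (b ξ : ℝ) : 𝓕 (fun x ↦ f (a * x + b)) ξ = |a|⁻¹ • 𝐞 (b * ξ / a) • 𝓕 f (ξ / a) := by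
  have phase (x : ℝ) : 𝐞 (-(x * ξ)) = 𝐞 (b * ξ / a) * 𝐞 (-((a * x + b) * (ξ / a))) := by
    rw [← AddChar.map_add_eq_mul]
    congr 1
    field_simp
    ring
  simp only [Real.fourier_real_eq, phase, mul_smul]
  rw [Measure.integral_comp_mul_add (fun y ↦ 𝐞 (b * ξ / a) • 𝐞 (-(y * (ξ / a))) • f y) ha b]
  congr 1
  exact integral_smul _ _

theorem HasCompactSupport.comp_mul_add {α : Type*} [Zero α] {f : ℝ → α}
    (hf : HasCompactSupport f) {a : ℝ} (ha : a ≠ 0) (b : ℝ) :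
    HasCompactSupport fun x ↦ f (a * x + b) :=
  hf.comp_homeomorph (affineHomeomorph a b ha)

theorem tsum_comp_mul_add_eq_tsum_fourier {f : ℝ → ℂ} (hf : ContDiff ℝ ∞ f)
    (hsupp : HasCompactSupport f) {a : ℝ} (ha : a ≠ 0) (b : ℝ) :
    ∑' j : ℤ, f (a * j + b) = |a|⁻¹ • ∑' m : ℤ, 𝐞 (b * m / a) • 𝓕 f (m / a) := by
  let g := (hsupp.comp_mul_add ha b).toSchwartzMap (hf.comp (by fun_prop))
  have hpoisson := g.tsum_eq_tsum_fourier 0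
  have hg : ⇑g = fun x ↦ f (a * x + b) := rfl
  simp only [zero_add, QuotientAddGroup.mk_zero, fourier_eval_zero, mul_one,
    SchwartzMap.fourier_coe, hg, Real.fourier_comp_mul_add f ha] at hpoisson
  rw [hpoisson, tsum_const_smul'']

theorem SchwartzMap.norm_le_seminorm_mul_rpow_neg [NormedSpace ℝ E] (f : 𝓢(ℝ, E)) (k : ℕ)
    {x : ℝ} (hx : x ≠ 0) : ‖f x‖ ≤ SchwartzMap.seminorm ℝ k 0 f * |x| ^ (-(k : ℝ)) := by
  have := f.norm_pow_mul_le_seminorm ℝ k x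
  rw [Real.rpow_neg (abs_nonneg x), Real.rpow_natCast, ← div_eq_mul_inv,
    le_div_iff₀ (by positivity), mul_comm, ← Real.norm_eq_abs]
  exact this

theorem norm_tsum_sub_apply_zero_le [CompleteSpace E] {F : ℤ → E} {C s : ℝ} (hs : 1 < s)
    (hF : ∀ m ≠ 0, ‖F m‖ ≤ C * |(m : ℝ)| ^ (-s)) :
    ‖∑' m, F m - F 0‖ ≤ C * ∑' m : ℤ, |(m : ℝ)| ^ (-s) := by
  -- `0 ^ (-s) = 0`, so the bound also holds at the removed term `m = 0`
  have hG : ∀ m, ‖if m = 0 then 0 else F m‖ ≤ C * |(m : ℝ)| ^ (-s) := by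
    intro m
    split_ifs with hm
    · simp [hm, Real.zero_rpow (by linarith : -s ≠ 0)]
    · exact hF m hm
  have hsum := (Real.summable_abs_int_rpow hs).mul_left C
  have hFsum : Summable F := hsum.of_norm_bounded_eventually ((eventually_cofinite_ne 0).mono hF)
  rw [hFsum.tsum_eq_add_tsum_ite 0, add_sub_cancel_left]
  exact tsum_of_norm_bounded hsum.hasSum hG |>.trans_eq tsum_mul_left

theorem exists_norm_smul_tsum_comp_mul_add_sub_integral_le {f : ℝ → ℂ} (hf : ContDiff ℝ ∞ f)
    (hsupp : HasCompactSupport f) {n : ℕ} (hn : 2 ≤ n) :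
    ∃ C, ∀ a ≠ 0, ∀ b, ‖|a| • ∑' j : ℤ, f (a * j + b) - ∫ x, f x‖ ≤ C * |a| ^ n := by
  let φ := 𝓕 (hsupp.toSchwartzMap hf)
  have hφ : ⇑φ = 𝓕 f := rfl
  let S := ∑' m : ℤ, |(m : ℝ)| ^ (-(n : ℝ))
  refine ⟨SchwartzMap.seminorm ℝ n 0 φ * S, fun a ha b ↦ ?_⟩
  have hF (m : ℤ) (hm : m ≠ 0) : ‖𝐞 (b * m / a) • 𝓕 f (m / a)‖
      ≤ SchwartzMap.seminorm ℝ n 0 φ * |a| ^ n * |(m : ℝ)| ^ (-(n : ℝ)) := by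
    rw [Circle.norm_smul, ← hφ]
    refine (φ.norm_le_seminorm_mul_rpow_neg n (by simpa [ha] using hm)).trans_eq ?_
    rw [abs_div, Real.div_rpow (abs_nonneg _) (abs_nonneg _), Real.rpow_neg (abs_nonneg a),
      Real.rpow_natCast]
    field_simp
  have hmain : |a| • ∑' j : ℤ, f (a * j + b) = ∑' m : ℤ, 𝐞 (b * m / a) • 𝓕 f (m / a) := by
    rw [tsum_comp_mul_add_eq_tsum_fourier hf hsupp ha, smul_inv_smul₀ (abs_ne_zero.mpr ha)]
  have hzero : 𝐞 (b * (0 : ℤ) / a) • 𝓕 f ((0 : ℤ) / a) = ∫ x, f x := by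
    simp [Real.fourier_real_eq]
  rw [hmain, ← hzero, mul_right_comm]
  exact norm_tsum_sub_apply_zero_le (by exact_mod_cast hn) hF

/-- Poisson-summation estimate: for smooth compactly supported `h`,
`∑_{j ∈ ℤ} h((2j−1)/K) = (K/2) ∫ h + O_B(K^{−B})` for every `B > 0`. -/
theorem poisson_sum_half_integral_weights (h : ℝ → ℂ) (hsm : ContDiff ℝ (⊤ : ℕ∞) h)
    (hsupp : HasCompactSupport h) :
    ∀ B : ℝ, 0 < B → ∃ C : ℝ, 0 < C ∧ ∀ K : ℝ, 1 ≤ K →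
      ‖(∑' j : ℤ, h ((2 * (j : ℝ) - 1) / K)) - (K / 2) * ∫ t : ℝ, h t‖ ≤ C * K ^ (-B) := by
  intro B _
  set N := ⌈B⌉₊
  obtain ⟨C, hC⟩ :=
    exists_norm_smul_tsum_comp_mul_add_sub_integral_le hsm hsupp (n := N + 2) (by omega)
  refine ⟨max C 1 * 2 ^ (N + 1), by positivity, fun K hK ↦ ?_⟩
  have hK0 : 0 < K := by linarith
  have hstep : |2 / K| = 2 / K := abs_of_pos (by positivity)
  have hterm (j : ℤ) : 2 / K * j + -1 / K = (2 * (j : ℝ) - 1) / K := by ring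
  have hriemann := hC (2 / K) (by positivity) (-1 / K)
  simp only [hstep, hterm] at hriemann
  have hdecay : (K ^ (N + 1))⁻¹ ≤ K ^ (-B) := by
    rw [← Real.rpow_natCast, ← Real.rpow_neg hK0.le]
    exact Real.rpow_le_rpow_of_exponent_le hK (by push_cast; linarith [Nat.le_ceil B])
  calc ‖(∑' j : ℤ, h ((2 * (j : ℝ) - 1) / K)) - (K / 2) * ∫ t : ℝ, h t‖
      = K / 2 * ‖(2 / K) • ∑' j : ℤ, h ((2 * (j : ℝ) - 1) / K) - ∫ t, h t‖ := by
        rw [← Real.norm_of_nonneg (by positivity : 0 ≤ K / 2), ← norm_smul, smul_sub,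
          smul_smul, show K / 2 * (2 / K) = 1 by field_simp, one_smul,
          Complex.real_smul]
        push_cast
        rfl
    _ ≤ K / 2 * (C * (2 / K) ^ (N + 2)) := by gcongr
    _ = C * 2 ^ (N + 1) * (K ^ (N + 1))⁻¹ := by
        rw [div_pow, pow_succ _ (N + 1), pow_succ _ (N + 1)]
        field_simp
    _ ≤ max C 1 * 2 ^ (N + 1) * K ^ (-B) := by gcongr; exact le_max_left C 1
end

section
/- Let h : ℕ → ℝ take values in {−1, 0, 1} and satisfy h(mn) = h(m)·h(n) whenever gcd(m,n) = 1. Let p be a prime and ν ≥ 1 an integer with h(p^ν) = −1. Then for every real X ≥ 1 and each sign ε ∈ {−1, +1}, one has Σ_{1 ≤ m ≤ X} (|h(m)| + ε·h(m)) ≥ 2·Σ_{1 ≤ m ≤ X/p^ν, p ∤ m} |h(m)|. -/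
/-- Sieve-type lower bound: if `h : ℕ → {−1,0,1}` is multiplicative on coprime arguments
and `h(p^ν) = −1`, then for each sign `ε = ±1`,
`∑_{1 ≤ m ≤ X} (|h(m)| + ε h(m)) ≥ 2 ∑_{1 ≤ m ≤ X/p^ν, p ∤ m} |h(m)|`. -/
theorem sign_change_lower_bound (h : ℕ → ℝ)
    (hval : ∀ m : ℕ, h m = -1 ∨ h m = 0 ∨ h m = 1)
    (hmul : ∀ m n : ℕ, Nat.Coprime m n → h (m * n) = h m * h n)
    (p : ℕ) (hp : p.Prime) (ν : ℕ) (hν : 1 ≤ ν) (hneg : h (p ^ ν) = -1)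
    (X : ℝ) (hX : 1 ≤ X) (ε : ℝ) (hε : ε = 1 ∨ ε = -1) :
    2 * ∑ m ∈ (Finset.Icc 1 ⌊X / (p : ℝ) ^ ν⌋₊).filter (fun m => ¬ p ∣ m), |h m|
      ≤ ∑ m ∈ Finset.Icc 1 ⌊X⌋₊, (|h m| + ε * h m) := by
  set T := (Finset.Icc 1 ⌊X / (p : ℝ) ^ ν⌋₊).filter (fun m => ¬ p ∣ m) with hT
  have hppos : 0 < p := hp.pos
  have hpν : (1:ℕ) ≤ p ^ ν := Nat.one_le_pow _ _ hppos
  have hpνR : (1:ℝ) ≤ (p:ℝ) ^ ν := by exact_mod_cast hpν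
  have hpνRpos : (0:ℝ) < (p:ℝ) ^ ν := lt_of_lt_of_le one_pos hpνR
  have key : ∀ m ∈ T, h (p ^ ν * m) = - h m := by
    intro m hm
    simp only [hT, Finset.mem_filter] at hm
    have hcop : Nat.Coprime (p ^ ν) m :=
      Nat.Coprime.pow_left _ ((Nat.Prime.coprime_iff_not_dvd hp).mpr hm.2)
    rw [hmul _ _ hcop, hneg]; ring
  have hnonneg : ∀ m : ℕ, 0 ≤ |h m| + ε * h m := by
    intro m
    have habs : |ε * h m| = |h m| := by
      rcases hε with h1 | h1 <;> simp [h1, abs_neg]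
    nlinarith [neg_abs_le (ε * h m), abs_nonneg (h m)]
  have hsubA : T ⊆ Finset.Icc 1 ⌊X⌋₊ := by
    intro m hm
    simp only [hT, Finset.mem_filter, Finset.mem_Icc] at hm ⊢
    refine ⟨hm.1.1, hm.1.2.trans (Nat.floor_le_floor ?_)⟩
    exact div_le_self (le_trans zero_le_one hX) hpνR
  have hinj : ∀ a ∈ T, ∀ b ∈ T, p ^ ν * a = p ^ ν * b → a = b := by
    intro a _ b _ hab
    exact Nat.eq_of_mul_eq_mul_left (lt_of_lt_of_le one_pos hpν) hab
  have hsubB : T.image (fun m => p ^ ν * m) ⊆ Finset.Icc 1 ⌊X⌋₊ := by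
    intro n hn
    rcases Finset.mem_image.mp hn with ⟨m, hm, rfl⟩
    simp only [hT, Finset.mem_filter, Finset.mem_Icc] at hm
    have h1 : 1 ≤ p ^ ν * m := Nat.one_le_iff_ne_zero.mpr
      (Nat.mul_ne_zero (Nat.one_le_iff_ne_zero.mp hpν) (Nat.one_le_iff_ne_zero.mp hm.1.1))
    refine Finset.mem_Icc.mpr ⟨h1, Nat.le_floor ?_⟩
    have hmR : (m:ℝ) ≤ X / (p:ℝ) ^ ν := by
      calc (m:ℝ) ≤ (⌊X / (p:ℝ) ^ ν⌋₊ : ℝ) := by exact_mod_cast hm.1.2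
        _ ≤ X / (p:ℝ) ^ ν := Nat.floor_le (by positivity)
    calc ((p ^ ν * m : ℕ) : ℝ) = (p:ℝ) ^ ν * (m:ℝ) := by push_cast; ring
      _ ≤ (p:ℝ) ^ ν * (X / (p:ℝ) ^ ν) := by
          exact mul_le_mul_of_nonneg_left hmR (le_of_lt hpνRpos)
      _ = X := mul_div_cancel₀ X (ne_of_gt hpνRpos)
  have hdisj : Disjoint T (T.image (fun m => p ^ ν * m)) := by
    rw [Finset.disjoint_left]
    intro n hn hn'
    simp only [hT, Finset.mem_filter] at hn
    rcases Finset.mem_image.mp hn' with ⟨m, _, rfl⟩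
    exact hn.2 (Dvd.dvd.mul_right (dvd_pow_self p (Nat.one_le_iff_ne_zero.mp hν)) m)
  have hsumB : ∑ n ∈ T.image (fun m => p ^ ν * m), (|h n| + ε * h n)
      = ∑ m ∈ T, (|h m| - ε * h m) := by
    rw [Finset.sum_image hinj]
    refine Finset.sum_congr rfl fun m hm => ?_
    rw [key m hm, abs_neg]; ring
  have hunion : ∑ n ∈ T ∪ T.image (fun m => p ^ ν * m), (|h n| + ε * h n)
      = ∑ m ∈ T, (|h m| + ε * h m) + ∑ m ∈ T, (|h m| - ε * h m) := by
    rw [Finset.sum_union hdisj, hsumB]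
  have hfinal : ∑ n ∈ T ∪ T.image (fun m => p ^ ν * m), (|h n| + ε * h n)
      ≤ ∑ m ∈ Finset.Icc 1 ⌊X⌋₊, (|h m| + ε * h m) := by
    refine Finset.sum_le_sum_of_subset_of_nonneg (Finset.union_subset hsubA hsubB)
      fun i _ _ => hnonneg i
  calc 2 * ∑ m ∈ T, |h m|
      = ∑ m ∈ T, (|h m| + ε * h m) + ∑ m ∈ T, (|h m| - ε * h m) := by
        rw [← Finset.sum_add_distrib]
        rw [Finset.mul_sum]
        refine Finset.sum_congr rfl fun m _ => by ring
    _ ≤ ∑ m ∈ Finset.Icc 1 ⌊X⌋₊, (|h m| + ε * h m) := by rw [← hunion]; exact hfinal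
end
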